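/- In Cl(ℝ³), for a multivector M = a + v + jw + jt with M M̄ invertible in the center (i.e. (a² − v² + w² − t²)² + 4(at − v·w)² ≠ 0), the element M⁻¹ = M̄ (M M̄)⁻¹ satisfies M M⁻¹ = M⁻¹ M = 1. -/
import Mathlib


noncomputable section
open CliffordAlgebra

/-- The Euclidean quadratic form on `ℝ³`. -/
def Q3 : QuadraticForm ℝ (Fin 3 → ℝ) :=
  QuadraticMap.weightedSumSquares ℝ (fun _ : Fin 3 => (1 : ℝ))

/-- The Clifford algebra `Cl(ℝ³)`. -/
abbrev Cl3 := CliffordAlgebra Q3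

/-- The orthonormal basis vectors `e₁, e₂, e₃` of `Cl(ℝ³)`. -/
def e (i : Fin 3) : Cl3 := ι Q3 (Pi.single i 1)

/-- The pseudoscalar `j = e₁e₂e₃` of `Cl(ℝ³)`. -/
def jj : Cl3 := e 0 * e 1 * e 2

lemma Qval (x : Fin 3 → ℝ) : Q3 x = x 0 * x 0 + x 1 * x 1 + x 2 * x 2 := by
  simp [Q3, QuadraticMap.weightedSumSquares_apply, Fin.sum_univ_three]

lemma Qval3 (x y z : ℝ) : Q3 ![x, y, z] = x ^ 2 + y ^ 2 + z ^ 2 := by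
  rw [Qval]; simp; ring

lemma polar3 (x y z u v w : ℝ) :
    QuadraticMap.polar Q3 ![x, y, z] ![u, v, w] = 2 * (x * u + y * v + z * w) := by
  simp [QuadraticMap.polar, Qval]; ring

lemma vec_eq (x y z : ℝ) : x • e 0 + y • e 1 + z • e 2 = ι Q3 ![x, y, z] := by
  simp only [e, ← map_smul, ← map_add]
  congr 1
  funext i
  fin_cases i <;> simp [Pi.single_apply]

lemma esq (i : Fin 3) : e i * e i = 1 := by
  rw [e, ι_sq_scalar]
  have : Q3 (Pi.single i 1) = 1 := by
    rw [Qval]; fin_cases i <;> norm_num [Pi.single_apply, Fin.ext_iff]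
  rw [this, map_one]

lemma eswap {i j : Fin 3} (h : i ≠ j) : e i * e j = -(e j * e i) := by
  have hs := ι_mul_ι_add_swap (Q := Q3) (Pi.single i 1) (Pi.single j 1)
  have hp : QuadraticMap.polar Q3 (Pi.single i 1) (Pi.single j 1) = 0 := by
    simp only [QuadraticMap.polar, Qval]
    fin_cases i <;> fin_cases j <;> simp_all [Pi.single_apply]
  rw [hp, map_zero] at hs
  rw [e, e]
  linear_combination (norm := noncomm_ring) hs

lemma h00 (x : Cl3) : e 0 * (e 0 * x) = x := by rw [← mul_assoc, esq, one_mul]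
lemma h11 (x : Cl3) : e 1 * (e 1 * x) = x := by rw [← mul_assoc, esq, one_mul]
lemma h22 (x : Cl3) : e 2 * (e 2 * x) = x := by rw [← mul_assoc, esq, one_mul]
lemma h10 : e 1 * e 0 = -(e 0 * e 1) := eswap (by decide)
lemma h20 : e 2 * e 0 = -(e 0 * e 2) := eswap (by decide)
lemma h21 : e 2 * e 1 = -(e 1 * e 2) := eswap (by decide)
lemma h10' (x : Cl3) : e 1 * (e 0 * x) = -(e 0 * (e 1 * x)) := by
  rw [← mul_assoc, h10, neg_mul, mul_assoc]
lemma h20' (x : Cl3) : e 2 * (e 0 * x) = -(e 0 * (e 2 * x)) := by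
  rw [← mul_assoc, h20, neg_mul, mul_assoc]
lemma h21' (x : Cl3) : e 2 * (e 1 * x) = -(e 1 * (e 2 * x)) := by
  rw [← mul_assoc, h21, neg_mul, mul_assoc]

lemma jj_sq : jj * jj = -1 := by
  simp [jj, mul_assoc, h00, h11, h22, h10, h20, h21, h10', h20', h21', esq]

lemma jj_e (i : Fin 3) : jj * e i = e i * jj := by
  fin_cases i <;>
    simp [jj, mul_assoc, h00, h11, h22, h10, h20, h21, h10', h20', h21', esq]

lemma MMbar_key (a t qv qw p : ℝ) (V W : Cl3)
    (hVV : V * V = algebraMap ℝ Cl3 qv)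
    (hWW : W * W = algebraMap ℝ Cl3 qw)
    (hVW : V * W + W * V = algebraMap ℝ Cl3 p)
    (hjV : jj * V = V * jj) (hjW : jj * W = W * jj) :
    (algebraMap ℝ Cl3 a + V + jj * W + t • jj) *
      (algebraMap ℝ Cl3 a - V - jj * W + t • jj)
      = algebraMap ℝ Cl3 (a ^ 2 - qv + qw - t ^ 2) + (2 * (a * t) - p) • jj ∧
    (algebraMap ℝ Cl3 a - V - jj * W + t • jj) *
      (algebraMap ℝ Cl3 a + V + jj * W + t • jj)
      = algebraMap ℝ Cl3 (a ^ 2 - qv + qw - t ^ 2) + (2 * (a * t) - p) • jj := by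
  have hPN : (algebraMap ℝ Cl3 a + t • jj) * (V + jj * W)
      = (V + jj * W) * (algebraMap ℝ Cl3 a + t • jj) := by
    have c1 : algebraMap ℝ Cl3 a * V = V * algebraMap ℝ Cl3 a := Algebra.commutes a V
    have c2 : algebraMap ℝ Cl3 a * (jj * W) = (jj * W) * algebraMap ℝ Cl3 a :=
      Algebra.commutes a _
    have c3 : (t • jj) * V = V * (t • jj) := by
      rw [smul_mul_assoc, mul_smul_comm, hjV]
    have c4 : (t • jj) * (jj * W) = (jj * W) * (t • jj) := by
      rw [smul_mul_assoc, mul_smul_comm]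
      congr 1
      rw [mul_assoc, hjW, ← mul_assoc, hjW]
    simp only [mul_add, add_mul, c1, c2, c3, c4]
    abel
  have hPP : (algebraMap ℝ Cl3 a + t • jj) * (algebraMap ℝ Cl3 a + t • jj)
      = algebraMap ℝ Cl3 (a ^ 2 - t ^ 2) + (2 * (a * t)) • jj := by
    simp only [mul_add, add_mul, smul_mul_assoc, mul_smul_comm, jj_sq,
      Algebra.algebraMap_eq_smul_one, one_mul, mul_one]
    module
  have hNN : (V + jj * W) * (V + jj * W)
      = algebraMap ℝ Cl3 (qv - qw) + p • jj := by
    have e1 : V * (jj * W) = jj * (V * W) := by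
      rw [← mul_assoc, ← hjV, mul_assoc]
    have e2 : (jj * W) * V = jj * (W * V) := by rw [mul_assoc]
    have e3 : (jj * W) * (jj * W) = -(W * W) := by
      calc (jj * W) * (jj * W) = jj * ((W * jj) * W) := by
            rw [mul_assoc, ← mul_assoc W jj W]
        _ = (jj * jj) * (W * W) := by rw [← hjW]; noncomm_ring
        _ = -(W * W) := by rw [jj_sq, neg_one_mul]
    rw [add_mul, mul_add, mul_add, e1, e2, e3, hVV, hWW]
    have e4 : algebraMap ℝ Cl3 qv + jj * (V * W) + (jj * (W * V) + -(algebraMap ℝ Cl3 qw))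
        = algebraMap ℝ Cl3 qv - algebraMap ℝ Cl3 qw + jj * (V * W + W * V) := by
      noncomm_ring
    rw [e4, hVW, ← Algebra.commutes, ← Algebra.smul_def, ← map_sub]
  have exp1 : (algebraMap ℝ Cl3 a + V + jj * W + t • jj) *
      (algebraMap ℝ Cl3 a - V - jj * W + t • jj)
      = ((algebraMap ℝ Cl3 a + t • jj) + (V + jj * W)) *
        ((algebraMap ℝ Cl3 a + t • jj) - (V + jj * W)) := by
    congr 1 <;> abel
  have exp2 : (algebraMap ℝ Cl3 a - V - jj * W + t • jj) *
      (algebraMap ℝ Cl3 a + V + jj * W + t • jj)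
      = ((algebraMap ℝ Cl3 a + t • jj) - (V + jj * W)) *
        ((algebraMap ℝ Cl3 a + t • jj) + (V + jj * W)) := by
    congr 1 <;> abel
  set P : Cl3 := algebraMap ℝ Cl3 a + t • jj
  set N : Cl3 := V + jj * W
  have hdiff : P * P - N * N
      = algebraMap ℝ Cl3 (a ^ 2 - qv + qw - t ^ 2) + (2 * (a * t) - p) • jj := by
    rw [hPP, hNN]
    simp only [Algebra.algebraMap_eq_smul_one]
    module
  constructor
  · rw [exp1]
    calc (P + N) * (P - N) = P * P - P * N + (N * P - N * N) := by noncomm_ring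
      _ = P * P - N * N := by rw [hPN]; noncomm_ring
      _ = _ := hdiff
  · rw [exp2]
    calc (P - N) * (P + N) = P * P + P * N - (N * P + N * N) := by noncomm_ring
      _ = P * P - N * N := by rw [hPN]; noncomm_ring
      _ = _ := hdiff

/-- For `M = a + v + jw + jt` in `Cl(ℝ³)` whose amplitude squared `M M̄ = c + jd` is a
nonzero central element (`c² + d² ≠ 0`), the element `M⁻¹ = M̄ (M M̄)⁻¹` is a two-sided
inverse of `M`. -/
theorem multivector_inverse_3d (a t v₁ v₂ v₃ w₁ w₂ w₃ : ℝ)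
    (c d : ℝ)
    (hc : c = a ^ 2 - (v₁ ^ 2 + v₂ ^ 2 + v₃ ^ 2) + (w₁ ^ 2 + w₂ ^ 2 + w₃ ^ 2) - t ^ 2)
    (hd : d = 2 * (a * t - (v₁ * w₁ + v₂ * w₂ + v₃ * w₃)))
    (h : c ^ 2 + d ^ 2 ≠ 0)
    (M Mbar Minv : Cl3)
    (hM : M = algebraMap ℝ Cl3 a + (v₁ • e 0 + v₂ • e 1 + v₃ • e 2) +
      jj * (w₁ • e 0 + w₂ • e 1 + w₃ • e 2) + t • jj)
    (hMbar : Mbar = algebraMap ℝ Cl3 a - (v₁ • e 0 + v₂ • e 1 + v₃ • e 2) -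
      jj * (w₁ • e 0 + w₂ • e 1 + w₃ • e 2) + t • jj)
    (hMinv : Minv = Mbar * ((c ^ 2 + d ^ 2)⁻¹ • (algebraMap ℝ Cl3 c - d • jj))) :
    M * Minv = 1 ∧ Minv * M = 1 := by
  have hVV : (v₁ • e 0 + v₂ • e 1 + v₃ • e 2) * (v₁ • e 0 + v₂ • e 1 + v₃ • e 2)
      = algebraMap ℝ Cl3 (v₁ ^ 2 + v₂ ^ 2 + v₃ ^ 2) := by
    rw [vec_eq, ι_sq_scalar, Qval3]
  have hWW : (w₁ • e 0 + w₂ • e 1 + w₃ • e 2) * (w₁ • e 0 + w₂ • e 1 + w₃ • e 2)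
      = algebraMap ℝ Cl3 (w₁ ^ 2 + w₂ ^ 2 + w₃ ^ 2) := by
    rw [vec_eq, ι_sq_scalar, Qval3]
  have hVW : (v₁ • e 0 + v₂ • e 1 + v₃ • e 2) * (w₁ • e 0 + w₂ • e 1 + w₃ • e 2) +
      (w₁ • e 0 + w₂ • e 1 + w₃ • e 2) * (v₁ • e 0 + v₂ • e 1 + v₃ • e 2)
      = algebraMap ℝ Cl3 (2 * (v₁ * w₁ + v₂ * w₂ + v₃ * w₃)) := by
    rw [vec_eq, vec_eq, ι_mul_ι_add_swap, polar3]
  have hjV : jj * (v₁ • e 0 + v₂ • e 1 + v₃ • e 2)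
      = (v₁ • e 0 + v₂ • e 1 + v₃ • e 2) * jj := by
    simp [mul_add, add_mul, mul_smul_comm, smul_mul_assoc, jj_e]
  have hjW : jj * (w₁ • e 0 + w₂ • e 1 + w₃ • e 2)
      = (w₁ • e 0 + w₂ • e 1 + w₃ • e 2) * jj := by
    simp [mul_add, add_mul, mul_smul_comm, smul_mul_assoc, jj_e]
  obtain ⟨k1, k2⟩ := MMbar_key a t (v₁ ^ 2 + v₂ ^ 2 + v₃ ^ 2) (w₁ ^ 2 + w₂ ^ 2 + w₃ ^ 2)
    (2 * (v₁ * w₁ + v₂ * w₂ + v₃ * w₃)) _ _ hVV hWW hVW hjV hjW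
  have hcd1 : M * Mbar = algebraMap ℝ Cl3 c + d • jj := by
    rw [hM, hMbar, k1, hc, hd]
    simp only [Algebra.algebraMap_eq_smul_one]
    module
  have hcd2 : Mbar * M = algebraMap ℝ Cl3 c + d • jj := by
    rw [hM, hMbar, k2, hc, hd]
    simp only [Algebra.algebraMap_eq_smul_one]
    module
  have hjM : jj * M = M * jj := by
    have h1 : jj * algebraMap ℝ Cl3 a = algebraMap ℝ Cl3 a * jj :=
      (Algebra.commutes a jj).symm
    have h3 : jj * (jj * (w₁ • e 0 + w₂ • e 1 + w₃ • e 2))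
        = (jj * (w₁ • e 0 + w₂ • e 1 + w₃ • e 2)) * jj := by
      rw [mul_assoc, ← hjW]
    have h4 : jj * (t • jj) = (t • jj) * jj := by
      rw [mul_smul_comm, smul_mul_assoc]
    rw [hM, mul_add, mul_add, mul_add, add_mul, add_mul, add_mul, h1, hjV, h3, h4]
  have hfin : (algebraMap ℝ Cl3 c + d • jj) *
      ((c ^ 2 + d ^ 2)⁻¹ • (algebraMap ℝ Cl3 c - d • jj)) = 1 := by
    rw [mul_smul_comm]
    have key : (algebraMap ℝ Cl3 c + d • jj) * (algebraMap ℝ Cl3 c - d • jj)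
        = algebraMap ℝ Cl3 (c ^ 2 + d ^ 2) := by
      simp only [mul_sub, sub_mul, add_mul, mul_add, smul_mul_assoc, mul_smul_comm, jj_sq,
        Algebra.algebraMap_eq_smul_one, one_mul, mul_one]
      module
    rw [key, Algebra.algebraMap_eq_smul_one, smul_smul, inv_mul_cancel₀ h, one_smul]
  have hsM : ((c ^ 2 + d ^ 2)⁻¹ • (algebraMap ℝ Cl3 c - d • jj)) * M
      = M * ((c ^ 2 + d ^ 2)⁻¹ • (algebraMap ℝ Cl3 c - d • jj)) := by
    rw [smul_mul_assoc, mul_smul_comm]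
    congr 1
    rw [sub_mul, mul_sub, Algebra.commutes, smul_mul_assoc, mul_smul_comm, hjM]
  constructor
  · rw [hMinv, ← mul_assoc, hcd1, hfin]
  · rw [hMinv, mul_assoc, hsM, ← mul_assoc, hcd2, hfin]
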